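/- For distinct indices d ≠ d' with 2 ≤ d, d' ≤ n, the full-support baker's map C_d of 𝔠ⁿ factors as C_d = (C_d restricted-and-prefixed to Γ(0_{d'})) ∘ (C_d restricted-and-prefixed to Γ(1_{d'})); that is, C_d equals the composition of the two homeomorphisms obtained by performing the coordinate-1-to-coordinate-d baker operation separately on the halves {d'-th coordinate starts with 0} and {d'-th coordinate starts with 1} of 𝔠ⁿ. -/

import Mathlib

open scoped Classical

/-- Finite words over the alphabet `{0,1}`. -/
abbrev Word := List Bool
/-- Cantor space: infinite `{0,1}`-sequences. -/
abbrev Cantor := ℕ → Bool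

/-- Concatenate a finite word with an infinite sequence. -/
def catW (α : Word) (w : Cantor) : Cantor :=
  fun i => if h : i < α.length then α.get ⟨i, h⟩ else w (i - α.length)

/-- The basic open set of sequences having `α` as a prefix. -/
def GammaW (α : Word) : Set Cantor := Set.range (catW α)

/-- Incomparability of words: neither is a prefix of the other. -/
def IncompW (α β : Word) : Prop := ¬ α <+: β ∧ ¬ β <+: α

/-- Addresses: `n`-tuples of finite words. -/
abbrev Addr (n : ℕ) := Fin n → Word
/-- `n`-dimensional Cantor space. -/
abbrev CantorN (n : ℕ) := Fin n → Cantor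

/-- The basic open set in `𝔠ⁿ` indexed by the address `α`. -/
def GammaN {n : ℕ} (α : Addr n) : Set (CantorN n) :=
  { w | ∀ d, w d ∈ GammaW (α d) }

/-- Incomparability of addresses: some coordinate pair is incomparable. -/
def IncompA {n : ℕ} (α β : Addr n) : Prop := ∃ d, IncompW (α d) (β d)

/-- Drop the first `k` symbols of an infinite sequence. -/
def dropSeq (k : ℕ) (w : Cantor) : Cantor := fun i => w (i + k)

/-- Prepend the address `α` coordinatewise. -/
def catA {n : ℕ} (α : Addr n) (u : CantorN n) : CantorN n :=
  fun d => catW (α d) (u d)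

/-- Remove the prefix `α` coordinatewise. -/
def dropA {n : ℕ} (α : Addr n) (w : CantorN n) : CantorN n :=
  fun d => dropSeq ((α d).length) (w d)

/-- The transposition `⟨α β⟩` of `𝔠ⁿ`: exchanges `Γ(α)` and `Γ(β)` by prefix
substitution and fixes all other points. -/
noncomputable def swapN {n : ℕ} (α β : Addr n) : CantorN n → CantorN n :=
  fun w =>
    if w ∈ GammaN α then catA β (dropA α w)
    else if w ∈ GammaN β then catA α (dropA β w)
    else w

/-- Append the symbol `x` to the `d`-th coordinate of the address `α`. -/
def appA {n : ℕ} (α : Addr n) (d : Fin n) (x : Bool) : Addr n :=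
  Function.update α d (α d ++ [x])

/-- Append the word `u` to the `d`-th coordinate of the address `α`. -/
def appW {n : ℕ} (α : Addr n) (d : Fin n) (u : Word) : Addr n :=
  Function.update α d (α d ++ u)

/-- Coordinatewise concatenation of addresses. -/
def concatA {n : ℕ} (α η : Addr n) : Addr n := fun d => α d ++ η d

/-- The address with word `u` in coordinate `d` and empty words elsewhere. -/
def unitA {n : ℕ} (d : Fin n) (u : Word) : Addr n :=
  fun e => if e = d then u else []

/-- Prepend a letter to an infinite sequence. -/
def consSeq (b : Bool) (w : Cantor) : Cantor :=
  fun i => match i with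
  | 0 => b
  | i + 1 => w i

/-- The full-support baker's map: moves the first letter of coordinate `1`
to the front of coordinate `d`. -/
def bakerFull {n : ℕ} [NeZero n] (d : Fin n) : CantorN n → CantorN n :=
  fun w e =>
    if e = 0 then dropSeq 1 (w 0)
    else if e = d then consSeq (w 0 0) (w d)
    else w e

/-- The inverse of the full-support baker's map: moves the first letter of
coordinate `d` to the front of coordinate `1`. -/
def invBakerFull {n : ℕ} [NeZero n] (d : Fin n) : CantorN n → CantorN n :=
  fun w e =>
    if e = 0 then consSeq (w d 0) (w 0)
    else if e = d then dropSeq 1 (w d)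
    else w e

/-- The index-`d` baker's map with support `Γ(α)`: sends `α.x₁.u ↦ α.x_d.u`
and fixes all points outside `Γ(α)`. -/
noncomputable def bakerN {n : ℕ} [NeZero n] (d : Fin n) (α : Addr n) :
    CantorN n → CantorN n :=
  fun w => if w ∈ GammaN α then catA α (bakerFull d (dropA α w)) else w

/-- The inverse of the index-`d` baker's map with support `Γ(α)`. -/
noncomputable def invBakerN {n : ℕ} [NeZero n] (d : Fin n) (α : Addr n) :
    CantorN n → CantorN n :=
  fun w => if w ∈ GammaN α then catA α (invBakerFull d (dropA α w)) else w

/-- The partial prefix-substitution action of the symbol `⟨γ δ⟩` on addresses,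
as a relation: `ActRel γ δ ζ ζ'` holds iff `ζ • ⟨γ δ⟩` is defined and
equals `ζ'`. -/
def ActRel {n : ℕ} (γ δ ζ ζ' : Addr n) : Prop :=
  (∃ η, ζ = concatA γ η ∧ ζ' = concatA δ η) ∨
  (∃ η, ζ = concatA δ η ∧ ζ' = concatA γ η) ∨
  (IncompA ζ γ ∧ IncompA ζ δ ∧ ζ' = ζ)

lemma catW_nil (w : Cantor) : catW [] w = w := by
  funext i; simp [catW]

lemma mem_GammaW_single (y : Bool) (w : Cantor) :
    w ∈ GammaW [y] ↔ w 0 = y := by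
  constructor
  · rintro ⟨u, rfl⟩; simp [catW]
  · intro h
    refine ⟨dropSeq 1 w, ?_⟩
    funext i
    cases i with
    | zero => simpa [catW] using h.symm
    | succ i => simp [catW, dropSeq]

lemma mem_GammaN_unit {n : ℕ} (d' : Fin n) (y : Bool) (w : CantorN n) :
    w ∈ GammaN (unitA d' [y]) ↔ w d' 0 = y := by
  constructor
  · intro h
    have := h d'
    simp only [unitA, if_pos rfl] at this
    exact (mem_GammaW_single y _).1 this
  · intro h e
    by_cases he : e = d'
    · subst he
      simp only [unitA, if_pos rfl]
      exact (mem_GammaW_single y _).2 h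
    · simp only [unitA, if_neg he]
      exact ⟨w e, catW_nil _⟩

lemma key {n : ℕ} [NeZero n] (d d' : Fin n) (hd' : d' ≠ 0) (hdd' : d ≠ d')
    (y : Bool) (w : CantorN n) (hw : w d' 0 = y) :
    catA (unitA d' [y]) (bakerFull d (dropA (unitA d' [y]) w)) = bakerFull d w := by
  funext e
  by_cases he' : e = d'
  · subst he'
    simp only [catA, bakerFull, unitA, dropA, if_pos rfl, if_neg hd',
      if_neg (Ne.symm hdd')]
    funext i
    cases i with
    | zero => simpa [catW] using hw.symm
    | succ i => simp [catW, dropSeq]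
  · have hαe : unitA d' [y] e = [] := by simp [unitA, he']
    by_cases he0 : e = 0
    · subst he0
      have hα0 : unitA d' [y] (0 : Fin n) = [] := hαe
      simp only [catA, bakerFull, dropA, if_pos rfl, hα0]
      rw [catW_nil]
      funext i
      simp [dropSeq]
    · by_cases hed : e = d
      · subst hed
        have hα0 : unitA d' [y] (0 : Fin n) = [] := by
          simp [unitA, (Ne.symm hd' : (0:Fin n) ≠ d')]
        simp only [catA, bakerFull, dropA, hαe, if_neg he0, if_pos rfl, hα0]
        rw [catW_nil]
        funext i
        cases i with
        | zero => simp [consSeq, dropSeq]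
        | succ i => simp [consSeq, dropSeq]
      · simp only [catA, bakerFull, dropA, hαe, if_neg he0, if_neg hed]
        rw [catW_nil]
        funext i
        simp [dropSeq]

/-- The full-support baker's map C_d is the composite of its restricted
versions supported on the halves Γ(0_{d'}) and Γ(1_{d'}) of `𝔠ⁿ`. -/
theorem stmt16 (n : ℕ) [NeZero n] (hn : 2 ≤ n) (d d' : Fin n)
    (hd : d ≠ 0) (hd' : d' ≠ 0) (hdd' : d ≠ d') :
    bakerFull d = bakerN d (unitA d' [false]) ∘ bakerN d (unitA d' [true]) := by
  funext w
  have hfix : bakerFull d w d' = w d' := by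
    simp [bakerFull, if_neg hd', if_neg (Ne.symm hdd')]
  simp only [Function.comp_apply, bakerN]
  cases hy : w d' 0 with
  | false =>
    have ht : w ∉ GammaN (unitA d' [true]) := by
      rw [mem_GammaN_unit, hy]; simp
    simp only [if_neg ht, if_pos ((mem_GammaN_unit d' false w).2 hy)]
    exact (key d d' hd' hdd' false w hy).symm
  | true =>
    simp only [if_pos ((mem_GammaN_unit d' true w).2 hy),
        key d d' hd' hdd' true w hy,
        if_neg (show bakerFull d w ∉ GammaN (unitA d' [false]) by
          rw [mem_GammaN_unit, hfix, hy]; simp)]
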